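/- arXiv:1001.4983 — 5 statements merged into one kernel-verified Lean document; each statement's English description precedes it below -/
import Mathlib

section
/- Let α^1,...,α^k, β be multi-indices in ℕ^n, c > 0 rational, and suppose there exists a vector b = (1, b_2, ..., b_n) with b_i ≥ 0 such that ⟨β + (1,...,1), b⟩ ≤ min_{1≤i≤k} ⟨c·α^i, b⟩. Then the function z ↦ |z^β|^2 / (|z^{α^1}|^{2c} + ... + |z^{α^k}|^{2c}) is NOT integrable on the unit polydisc in ℂ^n. -/
open MeasureTheory Finset

/-- Necessary condition: if `⟨β+1, b⟩ ≤ min_j ⟨cα^j, b⟩` for some nonnegative vector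
`b = (1, b₂, …, bₙ)`, then the monomial quotient is not integrable on the unit polydisc. -/
theorem monomial_quotient_not_integrable (n k : ℕ) (hn : 0 < n) (hk : 0 < k)
    (α : Fin k → Fin n → ℕ) (β : Fin n → ℕ) (c : ℚ) (hc : 0 < c)
    (b : Fin n → ℝ) (hb1 : b ⟨0, hn⟩ = 1) (hb : ∀ i, 0 ≤ b i)
    (hle : ∀ j, ∑ i, ((β i : ℝ) + 1) * b i ≤ ∑ i, (c : ℝ) * (α j i : ℝ) * b i) :
    ¬ IntegrableOn
      (fun z : Fin n → ℂ =>
        (‖∏ i, z i ^ β i‖) ^ 2 /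
          ∑ j, (‖∏ i, z i ^ α j i‖) ^ (2 * (c : ℝ)))
      {z : Fin n → ℂ | ∀ i, ‖z i‖ < 1} := by
  intro hI
  set f : (Fin n → ℂ) → ℝ := fun z =>
      (‖∏ i, z i ^ β i‖) ^ 2 /
        ∑ j, (‖∏ i, z i ^ α j i‖) ^ (2 * (c : ℝ)) with hf
  set i0 : Fin n := ⟨0, hn⟩ with hi0
  -- radii
  set lo : ℕ → Fin n → ℝ := fun t i => Real.exp (-(3 * t + 1) * b i - 1) with hlo
  set hi : ℕ → Fin n → ℝ := fun t i => Real.exp (-(3 * t) * b i) with hhi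
  set A : ℕ → Set (Fin n → ℂ) := fun t =>
      Set.pi Set.univ (fun i => Metric.ball (0 : ℂ) (hi t i) \ Metric.ball 0 (lo t i)) with hA
  have hmemA : ∀ t z, z ∈ A t ↔ ∀ i, lo t i ≤ ‖z i‖ ∧ ‖z i‖ < hi t i := by
    intro t z
    simp only [hA, Set.mem_pi, Set.mem_univ, forall_true_left, Set.mem_diff,
      Metric.mem_ball, Complex.dist_eq, sub_zero, not_lt]
    exact forall_congr' fun i => and_comm
  -- A t is measurable
  have hAm : ∀ t, MeasurableSet (A t) := by
    intro t
    exact MeasurableSet.univ_pi fun i =>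
      measurableSet_ball.diff measurableSet_ball
  -- A t ⊆ polydisc
  have hsub : ∀ t, A t ⊆ {z : Fin n → ℂ | ∀ i, ‖z i‖ < 1} := by
    intro t z hz i
    have := ((hmemA t z).1 hz i).2
    refine this.trans_le ?_
    rw [hhi]
    refine Real.exp_le_one_iff.2 ?_
    have h3 : (0:ℝ) ≤ 3 * t * b i := mul_nonneg (by positivity) (hb i)
    linarith
  -- disjointness
  have hdisj : Pairwise (Function.onFun Disjoint A) := by
    have key : ∀ t t' : ℕ, t < t' → ∀ z, z ∈ A t → z ∈ A t' → False := by
      intro t t' htt z hz hz'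
      have h1 := ((hmemA t z).1 hz i0).1
      have h2 := ((hmemA t' z).1 hz' i0).2
      simp only [hlo, hhi, hb1, mul_one] at h1 h2
      have := h1.trans_lt h2
      rw [Real.exp_lt_exp] at this
      have ht' : (t:ℝ) + 1 ≤ (t':ℝ) := by exact_mod_cast htt
      nlinarith
    intro t t' htt
    rcases lt_or_gt_of_ne htt with h | h
    · exact Set.disjoint_left.2 fun z hz hz' => key t t' h z hz hz'
    · exact Set.disjoint_left.2 fun z hz hz' => key t' t h z hz' hz
  have hem : Real.exp (-2:ℝ) < 1 := by
    rw [Real.exp_lt_one_iff]; norm_num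
  -- volume lower bound per annulus
  set S : ℝ := ∑ i, b i with hS
  have hlole : ∀ t i, lo t i ≤ hi t i := by
    intro t i
    rw [hlo, hhi]
    apply Real.exp_le_exp.2
    have h3 : (0:ℝ) ≤ b i := hb i
    nlinarith [hb i, Nat.cast_nonneg (α := ℝ) t]
  have hann : ∀ (t : ℕ) (i : Fin n),
      ENNReal.ofReal (Real.pi * (1 - Real.exp (-2)) * Real.exp (-(6*t) * b i)) ≤
        volume (Metric.ball (0:ℂ) (hi t i) \ Metric.ball 0 (lo t i)) := by
    intro t i
    rw [measure_diff (Metric.ball_subset_ball (hlole t i)) measurableSet_ball.nullMeasurableSet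
      measure_ball_lt_top.ne, Complex.volume_ball, Complex.volume_ball]
    have hpi : (NNReal.pi : ENNReal) = ENNReal.ofReal Real.pi := by
      rw [← NNReal.coe_real_pi, ENNReal.ofReal_coe_nnreal]
    rw [hpi, ← ENNReal.ofReal_pow (Real.exp_pos _).le, ← ENNReal.ofReal_pow (Real.exp_pos _).le,
      ← ENNReal.ofReal_mul (by positivity), ← ENNReal.ofReal_mul (by positivity),
      ← ENNReal.ofReal_sub _ (by positivity)]
    apply ENNReal.ofReal_le_ofReal
    have e1 : hi t i ^ 2 = Real.exp (-(6*t) * b i) := by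
      rw [hhi, pow_two, ← Real.exp_add]; congr 1; ring
    have e2 : lo t i ^ 2 = Real.exp (-(6*t) * b i) * Real.exp (-2 * b i - 2) := by
      rw [hlo, pow_two, ← Real.exp_add, ← Real.exp_add]; congr 1; ring
    rw [e1, e2]
    have h4 : Real.exp (-2 * b i - 2) ≤ Real.exp (-2) := by
      apply Real.exp_le_exp.2; nlinarith [hb i]
    nlinarith [mul_le_mul_of_nonneg_left h4
      (by positivity : (0:ℝ) ≤ Real.exp (-(6*(t:ℝ)) * b i) * Real.pi)]
  have hvol : ∀ t : ℕ,
      ENNReal.ofReal ((Real.pi * (1 - Real.exp (-2)))^n * Real.exp (-(6*t) * S)) ≤ volume (A t) := by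
    intro t
    rw [hA]
    rw [volume_pi_pi]
    calc ENNReal.ofReal ((Real.pi * (1 - Real.exp (-2)))^n * Real.exp (-(6*t) * S))
        = ∏ i : Fin n, ENNReal.ofReal
            (Real.pi * (1 - Real.exp (-2)) * Real.exp (-(6*t) * b i)) := by
          rw [← ENNReal.ofReal_prod_of_nonneg (fun i _ => by
            have := Real.exp_pos (-(6*(t:ℝ)) * b i)
            exact (mul_pos (mul_pos Real.pi_pos (by linarith)) this).le)]
          congr 1
          rw [Finset.prod_mul_distrib, Finset.prod_const, ← Real.exp_sum]
          congr 2
          · simp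
          · rw [hS, Finset.mul_sum]
      _ ≤ ∏ i : Fin n, volume (Metric.ball (0:ℂ) (hi t i) \ Metric.ball 0 (lo t i)) :=
          Finset.prod_le_prod' fun i _ => hann t i
  -- exponents
  set e₁ : ℕ → ℝ := fun t => 2 * ∑ i, (β i : ℝ) * (-(3 * t + 1) * b i - 1) with he₁
  set e₂ : ℕ → ℝ := fun t => (-(6 * t)) * ∑ i, ((β i : ℝ) + 1) * b i with he₂
  -- pointwise lower bound on A t
  have hpt : ∀ (t : ℕ) (z : Fin n → ℂ), z ∈ A t →
      Real.exp (e₁ t) / (k * Real.exp (e₂ t)) ≤ f z := by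
    intro t z hz
    have hz' := (hmemA t z).1 hz
    have habs : ∀ i, 0 < ‖z i‖ := fun i =>
      lt_of_lt_of_le (Real.exp_pos _) (hz' i).1
    have hnum : Real.exp (e₁ t) ≤ (‖∏ i, z i ^ β i‖) ^ 2 := by
      have h2 : ‖∏ i, z i ^ β i‖ = ∏ i, ‖z i‖ ^ β i := by
        rw [norm_prod]
        exact Finset.prod_congr rfl fun i _ => norm_pow _ _
      have h1 : ∏ i, lo t i ^ β i ≤ ∏ i, ‖z i‖ ^ β i :=
        Finset.prod_le_prod (fun i _ => pow_nonneg (Real.exp_pos _).le _)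
          (fun i _ => pow_le_pow_left₀ (Real.exp_pos _).le (hz' i).1 _)
      have h3 : ∏ i, lo t i ^ β i =
          Real.exp (∑ i, (β i : ℝ) * (-(3 * t + 1) * b i - 1)) := by
        rw [Real.exp_sum]
        exact Finset.prod_congr rfl fun i _ => by
          rw [hlo, Real.exp_nat_mul]
      have h4 : Real.exp (e₁ t) = (∏ i, lo t i ^ β i) ^ 2 := by
        rw [h3, pow_two, ← Real.exp_add, he₁]
        congr 1; ring
      rw [h2, h4]
      exact pow_le_pow_left₀ (Finset.prod_nonneg fun i _ =>
        pow_nonneg (Real.exp_pos _).le _) h1 2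
    have hden : (∑ j, (‖∏ i, z i ^ α j i‖) ^ (2 * (c:ℝ))) ≤
        k * Real.exp (e₂ t) := by
      have hterm : ∀ j, (‖∏ i, z i ^ α j i‖) ^ (2 * (c:ℝ)) ≤
          Real.exp (e₂ t) := by
        intro j
        have h2 : ‖∏ i, z i ^ α j i‖ = ∏ i, ‖z i‖ ^ α j i := by
          rw [norm_prod]
          exact Finset.prod_congr rfl fun i _ => norm_pow _ _
        have h1 : ∏ i, ‖z i‖ ^ α j i ≤ ∏ i, hi t i ^ α j i :=
          Finset.prod_le_prod (fun i _ => pow_nonneg (norm_nonneg _) _)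
            (fun i _ => pow_le_pow_left₀ (norm_nonneg _) (hz' i).2.le _)
        have h3 : ∏ i, hi t i ^ α j i =
            Real.exp (∑ i, (α j i : ℝ) * (-(3 * t) * b i)) := by
          rw [Real.exp_sum]
          exact Finset.prod_congr rfl fun i _ => by
            rw [hhi, Real.exp_nat_mul]
        calc (‖∏ i, z i ^ α j i‖) ^ (2 * (c:ℝ))
            ≤ (Real.exp (∑ i, (α j i : ℝ) * (-(3 * t) * b i))) ^ (2 * (c:ℝ)) := by
              rw [h2]
              exact Real.rpow_le_rpow (Finset.prod_nonneg fun i _ =>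
                pow_nonneg (norm_nonneg _) _) (h3 ▸ h1) (by positivity)
          _ = Real.exp ((-(6 * t)) * ∑ i, (c:ℝ) * (α j i : ℝ) * b i) := by
              rw [← Real.exp_mul]
              congr 1
              rw [Finset.sum_mul, Finset.mul_sum]
              exact Finset.sum_congr rfl fun i _ => by push_cast; ring
          _ ≤ Real.exp (e₂ t) := by
              rw [he₂]
              apply Real.exp_le_exp.2
              apply mul_le_mul_of_nonpos_left (hle j)
              have : (0:ℝ) ≤ 6 * t := by positivity
              linarith
      calc (∑ j, (‖∏ i, z i ^ α j i‖) ^ (2 * (c:ℝ)))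
          ≤ ∑ _j : Fin k, Real.exp (e₂ t) := Finset.sum_le_sum fun j _ => hterm j
        _ = k * Real.exp (e₂ t) := by
            rw [Finset.sum_const, Finset.card_univ, Fintype.card_fin, nsmul_eq_mul]
    have hdpos : 0 < ∑ j, (‖∏ i, z i ^ α j i‖) ^ (2 * (c:ℝ)) := by
      refine Finset.sum_pos (fun j _ => ?_) ⟨⟨0, hk⟩, Finset.mem_univ _⟩
      apply Real.rpow_pos_of_pos
      rw [norm_prod]
      exact Finset.prod_pos fun i _ => by
        rw [norm_pow]; exact pow_pos (habs i) _
    rw [hf]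
    exact div_le_div₀ (sq_nonneg _) hnum hdpos hden
  -- constant lower bound for the integral over A t
  set K : ℝ := ∑ i, 2 * (β i : ℝ) * (b i + 1) with hK
  set Cst : ℝ := (Real.pi * (1 - Real.exp (-2)))^n * (Real.exp (-K) / k) with hCst
  have hCpos : 0 < Cst := by
    apply mul_pos (pow_pos (mul_pos Real.pi_pos (by linarith)) n)
    exact div_pos (Real.exp_pos _) (by exact_mod_cast hk)
  have key : ∀ t : ℕ, ENNReal.ofReal Cst ≤ ∫⁻ z in A t, ↑‖f z‖₊ ∂volume := by
    intro t
    have hexp : e₁ t - e₂ t - (6 * t) * S = -K := by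
      simp only [he₁, he₂, hS, hK, Finset.mul_sum, ← Finset.sum_neg_distrib,
        ← Finset.sum_sub_distrib]
      exact Finset.sum_congr rfl fun i _ => by ring
    have h5 : Real.exp (e₁ t) * Real.exp (-(6 * t) * S) = Real.exp (-K) * Real.exp (e₂ t) := by
      rw [← Real.exp_add, ← Real.exp_add]
      congr 1; linarith [hexp]
    have hfl : 0 ≤ Real.exp (e₁ t) / (k * Real.exp (e₂ t)) := by positivity
    have h1 : ∫⁻ _z in A t, ENNReal.ofReal (Real.exp (e₁ t) / (k * Real.exp (e₂ t))) ∂volume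
        ≤ ∫⁻ z in A t, ↑‖f z‖₊ ∂volume := by
      refine setLIntegral_mono' (hAm t) fun z hz => ?_
      exact le_trans (ENNReal.ofReal_le_ofReal (hpt t z hz)) (Real.ofReal_le_enorm _)
    refine le_trans ?_ h1
    rw [setLIntegral_const]
    calc ENNReal.ofReal Cst
        = ENNReal.ofReal (Real.exp (e₁ t) / (k * Real.exp (e₂ t))) *
            ENNReal.ofReal ((Real.pi * (1 - Real.exp (-2)))^n * Real.exp (-(6*t) * S)) := by
          rw [← ENNReal.ofReal_mul hfl]
          congr 1
          rw [hCst]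
          have hk0 : (k:ℝ) ≠ 0 := by positivity
          have h5' := h5
          set P : ℝ := (Real.pi * (1 - Real.exp (-2)))^n with hP
          set E1 : ℝ := Real.exp (e₁ t) with hE1
          set E2 : ℝ := Real.exp (e₂ t) with hE2
          set E3 : ℝ := Real.exp (-(6*(t:ℝ)) * S) with hE3
          set EK : ℝ := Real.exp (-K) with hEK
          have h2ne : E2 ≠ 0 := (Real.exp_pos _).ne'
          field_simp
          linear_combination (-((Real.pi - Real.pi * Real.exp (-2))^n)) * h5'
      _ ≤ ENNReal.ofReal (Real.exp (e₁ t) / (k * Real.exp (e₂ t))) * volume (A t) :=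
          mul_le_mul_right (hvol t) _
  -- conclusion
  have hfin : (∫⁻ z in {z : Fin n → ℂ | ∀ i, ‖z i‖ < 1}, ↑‖f z‖₊ ∂volume) < ⊤ :=
    hI.2
  have htop : (⊤ : ENNReal) ≤
      ∫⁻ z in {z : Fin n → ℂ | ∀ i, ‖z i‖ < 1}, ↑‖f z‖₊ ∂volume := by
    calc (⊤ : ENNReal) = ∑' _t : ℕ, ENNReal.ofReal Cst :=
          (ENNReal.tsum_const_eq_top_of_ne_zero (by
            simp only [ne_eq, ENNReal.ofReal_eq_zero, not_le]; exact hCpos)).symm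
      _ ≤ ∑' t : ℕ, ∫⁻ z in A t, ↑‖f z‖₊ ∂volume := ENNReal.tsum_le_tsum key
      _ = ∫⁻ z in ⋃ t, A t, ↑‖f z‖₊ ∂volume := (lintegral_iUnion hAm hdisj _).symm
      _ ≤ _ := lintegral_mono_set (Set.iUnion_subset hsub)
  exact absurd (lt_of_le_of_lt htop hfin) (lt_irrefl _)
end

section
/- Let α^1,...,α^k ∈ ℕ^n be multi-indices and β ∈ ℕ^n. If β lies in the Newton polyhedron P = conv{α^1,...,α^k} + ℝ_{≥0}^n, then there exists a constant C > 0 such that for all z in the closed unit polydisc of ℂ^n, |z^β| ≤ C·(|z^{α^1}| + ... + |z^{α^k}|). -/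
open Finset Pointwise

/-- If `β` lies in the Newton polyhedron then `z^β` is dominated by the generators
on the closed unit polydisc. -/
theorem monomial_dominated_of_mem_newton (n k : ℕ) (α : Fin k → Fin n → ℕ) (β : Fin n → ℕ)
    (hβ : (fun i => (β i : ℝ)) ∈
      convexHull ℝ {x : Fin n → ℝ | ∃ j, x = fun i => (α j i : ℝ)} +
        {x : Fin n → ℝ | ∀ i, 0 ≤ x i}) :
    ∃ C > 0, ∀ z : Fin n → ℂ, (∀ i, ‖z i‖ ≤ 1) →
      ‖∏ i, z i ^ β i‖ ≤ C * ∑ j, ‖∏ i, z i ^ α j i‖ := by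
  obtain ⟨γ, hγ, δ, hδ, hγδ⟩ := hβ
  obtain ⟨ι, _, w, y, hw0, hw1, hy, hwy⟩ := mem_convexHull_iff_exists_fintype.1 hγ
  choose p hp using hy
  refine ⟨1, one_pos, fun z hz => ?_⟩
  set x : Fin n → ℝ := fun i => ‖z i‖ with hx
  have hx0 : ∀ i, 0 ≤ x i := fun i => norm_nonneg _
  have key : ∀ j : Fin k, ‖∏ i, z i ^ α j i‖ = ∏ i, x i ^ (α j i : ℝ) := by
    intro j
    rw [norm_prod]
    exact Finset.prod_congr rfl fun i _ => by
      rw [norm_pow, ← Real.rpow_natCast]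
  have habs : ‖∏ i, z i ^ β i‖ = ∏ i, x i ^ ((β i : ℝ)) := by
    rw [norm_prod]
    exact Finset.prod_congr rfl fun i _ => by rw [norm_pow, ← Real.rpow_natCast]
  rw [habs, one_mul]
  -- β i = γ i + δ i
  have hβeq : ∀ i, (β i : ℝ) = γ i + δ i := fun i => (congrFun hγδ i).symm
  -- Step 1: drop δ
  have step1 : ∏ i, x i ^ ((β i : ℝ)) ≤ ∏ i, x i ^ γ i := by
    refine Finset.prod_le_prod (fun i _ => Real.rpow_nonneg (hx0 i) _) (fun i _ => ?_)
    rw [hβeq i, Real.rpow_add_of_nonneg (hx0 i) ?_ (hδ i)]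
    · exact mul_le_of_le_one_right (Real.rpow_nonneg (hx0 i) _)
        (Real.rpow_le_one (hx0 i) (hz i) (hδ i))
    · -- 0 ≤ γ i
      rw [← hwy]
      simp only [Finset.sum_apply, Pi.smul_apply, smul_eq_mul]
      exact Finset.sum_nonneg fun t _ => mul_nonneg (hw0 t) (by rw [hp t]; positivity)
  -- Step 2: γ product = weighted geometric mean
  have hγi : ∀ i, γ i = ∑ t, w t * (α (p t) i : ℝ) := by
    intro i
    rw [← hwy]
    simp only [Finset.sum_apply, Pi.smul_apply, smul_eq_mul]
    exact Finset.sum_congr rfl fun t _ => by rw [hp t]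
  have step2 : ∏ i, x i ^ γ i = ∏ t, (∏ i, x i ^ (α (p t) i : ℝ)) ^ w t := by
    have : ∀ t : ι, (∏ i, x i ^ (α (p t) i : ℝ)) ^ w t
        = ∏ i, (x i ^ (α (p t) i : ℝ)) ^ w t := fun t =>
      (Real.finset_prod_rpow _ _ (fun i _ => Real.rpow_nonneg (hx0 i) _) _).symm
    simp_rw [this]
    rw [Finset.prod_comm]
    refine Finset.prod_congr rfl fun i _ => ?_
    rw [hγi i, Real.rpow_sum_of_nonneg (hx0 i)
      (fun t _ => mul_nonneg (hw0 t) (by positivity))]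
    exact Finset.prod_congr rfl fun t _ => by
      rw [mul_comm, Real.rpow_mul (hx0 i), Real.rpow_natCast]
  -- Step 3: AM-GM
  have step3 : ∏ t, (∏ i, x i ^ (α (p t) i : ℝ)) ^ w t ≤
      ∑ t, w t * ∏ i, x i ^ (α (p t) i : ℝ) :=
    Real.geom_mean_le_arith_mean_weighted _ _ _ (fun t _ => hw0 t) hw1
      (fun t _ => Finset.prod_nonneg fun i _ => Real.rpow_nonneg (hx0 i) _)
  -- Step 4: bound each term by total sum
  have step4 : ∑ t, w t * ∏ i, x i ^ (α (p t) i : ℝ) ≤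
      ∑ j, ‖∏ i, z i ^ α j i‖ := by
    calc ∑ t, w t * ∏ i, x i ^ (α (p t) i : ℝ)
        ≤ ∑ t, w t * ∑ j, ∏ i, x i ^ (α j i : ℝ) := by
          refine Finset.sum_le_sum fun t _ => ?_
          refine mul_le_mul_of_nonneg_left ?_ (hw0 t)
          exact Finset.single_le_sum
            (f := fun j => ∏ i, x i ^ (α j i : ℝ))
            (fun j _ => Finset.prod_nonneg fun i _ => Real.rpow_nonneg (hx0 i) _)
            (Finset.mem_univ (p t))
      _ = ∑ j, ∏ i, x i ^ (α j i : ℝ) := by rw [← Finset.sum_mul, hw1, one_mul]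
      _ = ∑ j, ‖∏ i, z i ^ α j i‖ :=
          Finset.sum_congr rfl fun j _ => (key j).symm
  exact le_trans step1 (le_trans (le_of_eq step2) (le_trans step3 step4))
end

section
/- Let α^1,...,α^k ∈ ℕ^n and β ∈ ℕ^n with β not in the Newton polyhedron P = conv{α^1,...,α^k} + ℝ_{≥0}^n. Then there is NO neighborhood V of the origin in ℂ^n and constant C > 0 such that |z^β| ≤ C·(|z^{α^1}| + ... + |z^{α^k}|) for all z ∈ V. -/
open Finset Topology Pointwise

private lemma abs_monomial_curve {n : ℕ} {r : ℝ} (hr : 0 < r) (b : Fin n → ℝ) (γ : Fin n → ℕ) :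
    ‖∏ i, ((r ^ b i : ℝ) : ℂ) ^ γ i‖ = r ^ (∑ i, (γ i : ℝ) * b i) := by
  have h1 : (∏ i, ((r ^ b i : ℝ) : ℂ) ^ γ i) = ((∏ i, (r ^ b i) ^ γ i : ℝ) : ℂ) := by
    push_cast; ring
  rw [h1, Complex.norm_real, Real.norm_eq_abs, abs_of_nonneg (by positivity), Real.rpow_sum_of_pos hr]
  refine Finset.prod_congr rfl fun i _ => ?_
  rw [← Real.rpow_natCast (r ^ b i) (γ i), ← Real.rpow_mul hr.le, mul_comm]

private lemma tendsto_rpow_zero {c : ℝ} (hc : 0 < c) :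
    Filter.Tendsto (fun r : ℝ => r ^ c) (𝓝[>] (0:ℝ)) (𝓝 0) := by
  have h := (Real.continuousAt_rpow_const 0 c (Or.inr hc.le)).tendsto
  rw [Real.zero_rpow hc.ne'] at h
  exact h.mono_left nhdsWithin_le_nhds

/-- If `β` is not in the Newton polyhedron, no local bound `|z^β| ≤ C ∑ |z^{α^j}|`
holds near the origin. -/
theorem monomial_not_dominated_of_not_mem_newton (n k : ℕ)
    (α : Fin k → Fin n → ℕ) (β : Fin n → ℕ)
    (hβ : (fun i => (β i : ℝ)) ∉
      convexHull ℝ {x : Fin n → ℝ | ∃ j, x = fun i => (α j i : ℝ)} +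
        {x : Fin n → ℝ | ∀ i, 0 ≤ x i}) :
    ¬ ∃ V ∈ 𝓝 (0 : Fin n → ℂ), ∃ C > 0, ∀ z ∈ V,
      ‖∏ i, z i ^ β i‖ ≤ C * ∑ j, ‖∏ i, z i ^ α j i‖ := by
  -- Step 1: find b with all b i > 0 and ⟨β,b⟩ < ⟨α j, b⟩ for all j
  obtain ⟨b, hbpos, hBA⟩ : ∃ b : Fin n → ℝ, (∀ i, 0 < b i) ∧
      ∀ j, ∑ i, (β i : ℝ) * b i < ∑ i, (α j i : ℝ) * b i := by
    rcases Nat.eq_zero_or_pos k with hk | hk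
    · exact ⟨fun _ => 1, fun _ => one_pos,
        fun j => absurd j.isLt (by omega)⟩
    -- separation
    set S : Set (Fin n → ℝ) := {x : Fin n → ℝ | ∃ j, x = fun i => (α j i : ℝ)} with hS
    set Q : Set (Fin n → ℝ) := {x : Fin n → ℝ | ∀ i, 0 ≤ x i} with hQ
    have hSfin : S.Finite := by
      have : S = Set.range (fun j i => (α j i : ℝ)) := by
        ext x; simp [hS, Set.mem_range, eq_comm]
      rw [this]; exact Set.finite_range _
    have hQconv : Convex ℝ Q := fun x hx y hy a c ha hc hac i =>
      add_nonneg (mul_nonneg ha (hx i)) (mul_nonneg hc (hy i))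
    have hQcl : IsClosed Q := by
      have : Q = ⋂ i, {x : Fin n → ℝ | 0 ≤ x i} := by ext x; simp [hQ]
      rw [this]
      exact isClosed_iInter fun i => isClosed_le continuous_const (continuous_apply i)
    have hclosed : IsClosed (convexHull ℝ S + Q) :=
      hQcl.add_left_of_isCompact (hSfin.isCompact_convexHull ℝ)
    have hconv : Convex ℝ (convexHull ℝ S + Q) := (convex_convexHull ℝ S).add hQconv
    obtain ⟨f, u, hfu, hP⟩ := geometric_hahn_banach_point_closed hconv hclosed hβ
    set j0 : Fin k := ⟨0, hk⟩
    have hmem : ∀ (j : Fin k) (q : Fin n → ℝ), (∀ i, 0 ≤ q i) →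
        ((fun i => (α j i : ℝ)) + q) ∈ convexHull ℝ S + Q :=
      fun j q hq => Set.add_mem_add (subset_convexHull ℝ S ⟨j, rfl⟩) hq
    set b0 : Fin n → ℝ := fun i => f (fun j => if i = j then 1 else 0) with hb0
    have hfx : ∀ x : Fin n → ℝ, f x = ∑ i, x i * b0 i := by
      intro x
      conv_lhs => rw [pi_eq_sum_univ x]
      rw [map_sum]
      exact Finset.sum_congr rfl fun i _ => by rw [map_smul]; rfl
    -- b0 is nonnegative
    have hb0nn : ∀ i, 0 ≤ b0 i := by
      intro i
      by_contra hneg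
      push_neg at hneg
      set q : Fin n → ℝ := fun j => if i = j then (1:ℝ) else 0 with hq'
      have hfq : f q = b0 i := rfl
      have hu0 : u < f (fun i => (α j0 i : ℝ)) := by
        simpa using hP _ (hmem j0 0 fun _ => le_refl 0)
      set t : ℝ := (f (fun i => (α j0 i : ℝ)) - u + 1) / (-b0 i) with ht'
      have ht : 0 ≤ t := div_nonneg (by linarith) (by linarith)
      have hmem' := hP _ (hmem j0 (t • q) (fun j => by
        simp only [Pi.smul_apply, hq', smul_eq_mul]
        have h01 : (0:ℝ) ≤ if i = j then (1:ℝ) else 0 := by split <;> norm_num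
        exact mul_nonneg ht h01))
      rw [map_add, map_smul, smul_eq_mul, hfq] at hmem'
      have htb : t * b0 i = -(f (fun i => (α j0 i : ℝ)) - u + 1) := by
        rw [ht']
        field_simp [hneg.ne]
      rw [htb] at hmem'
      linarith
    set B0 : ℝ := ∑ i, (β i : ℝ) * b0 i with hB0def
    set A0 : Fin k → ℝ := fun j => ∑ i, (α j i : ℝ) * b0 i with hA0def
    have hstrict : ∀ j, B0 < A0 j := by
      intro j
      have h1 := hP _ (hmem j 0 fun _ => le_refl 0)
      rw [add_zero, hfx] at h1
      rw [hfx] at hfu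
      simp only [hB0def, hA0def]
      linarith
    obtain ⟨j1, -, hj1⟩ := Finset.exists_min_image Finset.univ (fun j => A0 j - B0)
      ⟨j0, Finset.mem_univ _⟩
    set d : ℝ := A0 j1 - B0 with hd
    have hdpos : 0 < d := by have := hstrict j1; rw [hd]; linarith
    set Sβ : ℝ := ∑ i, (β i : ℝ) with hSβ
    have hSβnn : 0 ≤ Sβ := Finset.sum_nonneg fun i _ => Nat.cast_nonneg _
    set ε : ℝ := d / (2 * Sβ + 2) with hε
    have hεpos : 0 < ε := div_pos hdpos (by linarith)
    refine ⟨fun i => b0 i + ε, fun i => by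
      show 0 < b0 i + ε
      have := hb0nn i
      linarith, fun j => ?_⟩
    have hεS : ε * Sβ < d := by
      rw [hε, div_mul_eq_mul_div, div_lt_iff₀ (by linarith)]
      nlinarith
    have hsum1 : ∑ i, (β i : ℝ) * (b0 i + ε) = B0 + ε * Sβ := by
      rw [hB0def, hSβ, Finset.mul_sum, ← Finset.sum_add_distrib]
      exact Finset.sum_congr rfl fun i _ => by ring
    have hsum2 : A0 j ≤ ∑ i, (α j i : ℝ) * (b0 i + ε) := by
      simp only [hA0def, mul_add, Finset.sum_add_distrib]
      have : 0 ≤ ∑ i, (α j i : ℝ) * ε :=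
        Finset.sum_nonneg fun i _ => mul_nonneg (Nat.cast_nonneg _) hεpos.le
      linarith
    have hdj : d ≤ A0 j - B0 := hj1 j (Finset.mem_univ _)
    rw [hsum1]
    calc B0 + ε * Sβ < B0 + d := by linarith
      _ ≤ A0 j := by linarith
      _ ≤ _ := hsum2
  -- Step 2: contradiction along the curve r ↦ (r^{b i})
  rintro ⟨V, hV, C, hC, hbd⟩
  set B : ℝ := ∑ i, (β i : ℝ) * b i with hB
  set A : Fin k → ℝ := fun j => ∑ i, (α j i : ℝ) * b i with hA
  set z : ℝ → Fin n → ℂ := fun r i => ((r ^ b i : ℝ) : ℂ) with hz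
  have h0 : Filter.Tendsto z (𝓝[>] (0:ℝ)) (𝓝 0) := by
    rw [tendsto_pi_nhds]
    intro i
    have := (Complex.continuous_ofReal.tendsto 0).comp (tendsto_rpow_zero (hbpos i))
    rw [Complex.ofReal_zero] at this
    exact this
  have h1 : Filter.Tendsto (fun r : ℝ => C * ∑ j, r ^ (A j - B)) (𝓝[>] (0:ℝ)) (𝓝 0) := by
    have hsum : Filter.Tendsto (fun r : ℝ => ∑ j, r ^ (A j - B)) (𝓝[>] (0:ℝ))
        (𝓝 (∑ j : Fin k, (0:ℝ))) :=
      tendsto_finset_sum _ fun j _ => tendsto_rpow_zero (sub_pos.2 (hBA j))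
    have := hsum.const_mul C
    simpa using this
  have hlt1 : ∀ᶠ r in 𝓝[>] (0:ℝ), C * ∑ j, r ^ (A j - B) < 1 :=
    h1.eventually_lt_const one_pos
  have hmemV : ∀ᶠ r in 𝓝[>] (0:ℝ), z r ∈ V := h0.eventually_mem hV
  have hpos : ∀ᶠ r in 𝓝[>] (0:ℝ), 0 < r := eventually_mem_nhdsWithin
  obtain ⟨r, hr1, hrV, hr0⟩ := (hlt1.and (hmemV.and hpos)).exists
  have hb1 := hbd (z r) hrV
  have hLHS : ‖∏ i, z r i ^ β i‖ = r ^ B := abs_monomial_curve hr0 b β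
  have hRHS : ∀ j, ‖∏ i, z r i ^ α j i‖ = r ^ A j :=
    fun j => abs_monomial_curve hr0 b (α j)
  rw [hLHS, Finset.sum_congr rfl (fun j _ => hRHS j)] at hb1
  have hsplit : ∀ j, r ^ A j = r ^ B * r ^ (A j - B) := fun j => by
    rw [show A j = B + (A j - B) by ring, Real.rpow_add hr0]
    ring_nf
  rw [Finset.sum_congr rfl (fun j _ => hsplit j), ← Finset.mul_sum] at hb1
  have hrB : 0 < r ^ B := Real.rpow_pos_of_pos hr0 _
  nlinarith [hb1, hr1, hrB]
end

section
/- Let p_1,...,p_k : ℂ^n → ℂ be polynomials and f : ℂ^n → ℂ a polynomial. Suppose f^N + b_1·f^{N-1} + ... + b_N = 0 identically, where each b_i is a ℂ-linear combination of products p_{j_1}···p_{j_i} of i of the generators. Then for every point q ∈ ℂ^n there is a neighborhood V of q and a constant C' > 0 such that |f(w)| ≤ C'·(|p_1(w)| + ... + |p_k(w)|) for all w ∈ V. -/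
open Finset Topology MvPolynomial

/-- An equation of integral dependence with coefficients which are `ℂ`-linear combinations
of `i`-fold products of the generators implies the local analytic bound. -/
theorem integral_dependence_implies_analytic_bound (n k N : ℕ) (hN : 1 ≤ N)
    (p : Fin k → MvPolynomial (Fin n) ℂ) (f : MvPolynomial (Fin n) ℂ)
    (b : Fin N → MvPolynomial (Fin n) ℂ)
    (hb : ∀ i : Fin N, b i ∈
      Submodule.span ℂ {q : MvPolynomial (Fin n) ℂ |
        ∃ g : Fin (i.1 + 1) → Fin k, q = ∏ m, p (g m)})
    (heq : f ^ N + ∑ i : Fin N, b i * f ^ (N - (i.1 + 1)) = 0) :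
    ∀ x : Fin n → ℂ, ∃ V ∈ 𝓝 x, ∃ C > 0, ∀ w ∈ V,
      ‖eval w f‖ ≤ C * ∑ j, ‖eval w (p j)‖ := by
  intro x
  set S : (Fin n → ℂ) → ℝ := fun w => ∑ j, ‖eval w (p j)‖ with hS
  have hSnn : ∀ w, 0 ≤ S w := fun w =>
    Finset.sum_nonneg fun j _ => norm_nonneg _
  clear_value S
  -- bound the coefficients
  have hbound : ∀ i : Fin N, ∃ c : ℝ, 0 ≤ c ∧
      ∀ w, ‖eval w (b i)‖ ≤ c * S w ^ (i.1 + 1) := by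
    intro i
    refine Submodule.span_induction ?_ ?_ ?_ ?_ (hb i)
    · rintro q ⟨g, rfl⟩
      refine ⟨1, zero_le_one, fun w => ?_⟩
      rw [one_mul, map_prod]
      calc ‖∏ m, eval w (p (g m))‖
          = ∏ m, ‖eval w (p (g m))‖ := norm_prod _ _
        _ ≤ ∏ _m : Fin (i.1 + 1), S w := by
            refine Finset.prod_le_prod (fun _ _ => norm_nonneg _) ?_
            intro m _
            rw [hS]
            exact Finset.single_le_sum
              (f := fun j => ‖eval w (p j)‖)
              (fun j _ => norm_nonneg _) (Finset.mem_univ _)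
        _ = S w ^ (i.1 + 1) := by simp
    · exact ⟨0, le_refl 0, fun w => by simp⟩
    · rintro q r _ _ ⟨c1, hc1, h1⟩ ⟨c2, hc2, h2⟩
      refine ⟨c1 + c2, by positivity, fun w => ?_⟩
      rw [map_add, add_mul]
      exact (norm_add_le _ _).trans (add_le_add (h1 w) (h2 w))
    · rintro a q _ ⟨c, hc, h⟩
      refine ⟨‖a‖ * c, by positivity, fun w => ?_⟩
      rw [smul_eq_C_mul, map_mul, norm_mul, eval_C, mul_assoc]
      exact mul_le_mul_of_nonneg_left (h w) (norm_nonneg _)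
  choose c hc0 hc using hbound
  set C : ℝ := (∑ i, c i) + 1 with hC
  have hcsum : 0 ≤ ∑ i, c i := Finset.sum_nonneg fun i _ => hc0 i
  clear_value C
  have hC1 : 1 ≤ C := by simp [hC]; linarith
  have hCpos : 0 < C := lt_of_lt_of_le one_pos hC1
  refine ⟨Set.univ, Filter.univ_mem, C, hCpos, fun w _ => ?_⟩
  set t : ℝ := ‖eval w f‖ with ht
  have htnn : 0 ≤ t := norm_nonneg _
  clear_value t
  -- the key inequality from the integral equation
  have h0 := congrArg (eval w) heq
  simp only [map_add, map_sum, map_mul, map_pow, map_zero] at h0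
  have hfN : (eval w f) ^ N = -∑ i : Fin N, eval w (b i) * (eval w f) ^ (N - (i.1 + 1)) := by
    linear_combination h0
  have hkey : t ^ N ≤ ∑ i : Fin N, c i * S w ^ (i.1 + 1) * t ^ (N - (i.1 + 1)) := by
    have : t ^ N = ‖∑ i : Fin N, eval w (b i) * (eval w f) ^ (N - (i.1 + 1))‖ := by
      rw [ht, ← norm_pow, hfN, norm_neg]
    rw [this]
    refine (norm_sum_le _ _).trans ?_
    refine Finset.sum_le_sum fun i _ => ?_
    rw [norm_mul, norm_pow, ← ht]
    exact mul_le_mul_of_nonneg_right (hc i w) (pow_nonneg htnn _)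
  -- conclude by contradiction
  by_contra hcon
  push_neg at hcon
  have hst : C * S w < t := by simpa only [hS] using hcon
  have htpos : 0 < t := lt_of_le_of_lt (mul_nonneg hCpos.le (hSnn w)) hst
  have hterm : ∀ i : Fin N, C * (c i * S w ^ (i.1 + 1) * t ^ (N - (i.1 + 1))) ≤ c i * t ^ N := by
    intro i
    have h1 : C * S w ^ (i.1 + 1) ≤ (C * S w) ^ (i.1 + 1) := by
      rw [mul_pow]
      exact mul_le_mul_of_nonneg_right
        (le_self_pow₀ hC1 (Nat.succ_ne_zero _)) (pow_nonneg (hSnn w) _)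
    have h2 : (C * S w) ^ (i.1 + 1) ≤ t ^ (i.1 + 1) :=
      pow_le_pow_left₀ (mul_nonneg hCpos.le (hSnn w)) hst.le _
    have h3 : t ^ (i.1 + 1) * t ^ (N - (i.1 + 1)) = t ^ N := by
      rw [← pow_add]
      congr 1
      omega
    calc C * (c i * S w ^ (i.1 + 1) * t ^ (N - (i.1 + 1)))
        = c i * (C * S w ^ (i.1 + 1)) * t ^ (N - (i.1 + 1)) := by ring
      _ ≤ c i * t ^ (i.1 + 1) * t ^ (N - (i.1 + 1)) := by
          exact mul_le_mul_of_nonneg_right (mul_le_mul_of_nonneg_left (h1.trans h2) (hc0 i))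
            (pow_nonneg htnn _)
      _ = c i * t ^ N := by rw [mul_assoc, h3]
  have hsum : C * (∑ i : Fin N, c i * S w ^ (i.1 + 1) * t ^ (N - (i.1 + 1)))
      ≤ (∑ i, c i) * t ^ N := by
    rw [Finset.mul_sum, Finset.sum_mul]
    exact Finset.sum_le_sum fun i _ => hterm i
  have htN : 0 < t ^ N := pow_pos htpos N
  have : C * t ^ N ≤ (∑ i, c i) * t ^ N :=
    le_trans (mul_le_mul_of_nonneg_left hkey hCpos.le) hsum
  have : C ≤ ∑ i, c i := le_of_mul_le_mul_right (by linarith [this]) htN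
  simp [hC] at this
  linarith
end

section
/- Let b = (1, b_2, ..., b_n) with b_i ≥ 0, and let g(z) = Σ_γ g_γ z^γ be a nonzero polynomial on ℂ^n with t_0 = min{⟨γ, b⟩ : g_γ ≠ 0}. Then there exist complex numbers w_1,...,w_n with |w_i| = 1 for all i, and constants C > 0 and r_0 > 0, such that |g(w_1 r, w_2 r^{b_2}, ..., w_n r^{b_n})| ≥ C · r^{t_0} for all 0 < r < r_0. -/
open Finset MvPolynomial

-- unit circle in ℂ is infinite
lemma circle_infinite : {z : ℂ | ‖z‖ = 1}.Infinite := by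
  have hinj : Set.InjOn (fun t : ℝ => Complex.exp (t * Complex.I)) (Set.Icc 0 Real.pi) := by
    intro s hs t ht h
    have : Real.cos s = Real.cos t := by
      have := congrArg Complex.re h
      simpa [Complex.exp_mul_I, Complex.cos_ofReal_re] using this
    exact Real.injOn_cos hs ht this
  have h1 : ((Set.Icc (0:ℝ) Real.pi).image (fun t : ℝ => Complex.exp (t * Complex.I))).Infinite :=
    Set.Infinite.image hinj ((Set.infinite_coe_iff).mp (Set.Icc.infinite Real.pi_pos))
  refine h1.mono ?_
  rintro z ⟨t, _, rfl⟩
  simp [Complex.norm_exp]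

lemma exists_torus_point : ∀ (m : ℕ) (h : MvPolynomial (Fin m) ℂ), h ≠ 0 →
    ∃ w : Fin m → ℂ, (∀ i, ‖w i‖ = 1) ∧ eval w h ≠ 0 := by
  intro m
  induction m with
  | zero =>
    intro h hne
    refine ⟨fun i => 1, fun i => by simp, ?_⟩
    have hC : h = C (h.coeff 0) := eq_C_of_isEmpty h
    rw [hC]
    simp only [eval_C]
    intro h0
    exact hne (by rw [hC, h0, map_zero])
  | succ m ih =>
    intro h hne
    set q := finSuccEquiv ℂ m h with hq
    have hq0 : q ≠ 0 := by
      simp only [hq, Ne, EmbeddingLike.map_eq_zero_iff]; exact hne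
    obtain ⟨j, hj⟩ : ∃ j, q.coeff j ≠ 0 := by
      by_contra hco
      push_neg at hco
      exact hq0 (Polynomial.ext fun j => by simp [hco j])
    obtain ⟨a, ha, ha0⟩ := ih _ hj
    set p := q.map (eval a) with hp
    have hp0 : p ≠ 0 := fun h0 => ha0 (by
      have := congrArg (fun P => Polynomial.coeff P j) h0
      simpa [hp, Polynomial.coeff_map] using this)
    have hroots := Polynomial.finite_setOf_isRoot hp0
    obtain ⟨z, hz⟩ := (circle_infinite.diff hroots).nonempty
    refine ⟨Fin.cons z a, ?_, ?_⟩
    · intro i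
      refine Fin.cases ?_ ?_ i
      · exact hz.1
      · intro j; simpa using ha j
    · rw [eval_eq_eval_mv_eval']
      exact fun h0 => hz.2 h0

/-- A nonzero polynomial is bounded below by `r^{t₀}` along a generic weighted curve,
where `t₀` is the minimal weight of its exponents. -/
theorem lower_bound_along_curve (n k : ℕ) (hn : 0 < n)
    (b : Fin n → ℝ) (hb1 : b ⟨0, hn⟩ = 1) (hb : ∀ i, 0 ≤ b i)
    (g : MvPolynomial (Fin n) ℂ) (hg : g ≠ 0) (t₀ : ℝ)
    (ht₀le : ∀ γ ∈ g.support, t₀ ≤ ∑ i, (γ i : ℝ) * b i)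
    (ht₀mem : ∃ γ ∈ g.support, t₀ = ∑ i, (γ i : ℝ) * b i) :
    ∃ w : Fin n → ℂ, (∀ i, ‖w i‖ = 1) ∧ ∃ C > 0, ∃ r₀ > 0,
      ∀ r : ℝ, 0 < r → r < r₀ →
        C * r ^ t₀ ≤ ‖eval (fun i => w i * ((r ^ b i : ℝ) : ℂ)) g‖ := by
  classical
  set tw : (Fin n →₀ ℕ) → ℝ := fun γ => ∑ i, (γ i : ℝ) * b i with htw
  set S : Finset (Fin n →₀ ℕ) := g.support.filter (fun γ => tw γ = t₀) with hS
  set h : MvPolynomial (Fin n) ℂ := ∑ γ ∈ S, monomial γ (coeff γ g) with hh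
  have hcoeffh : ∀ γ, coeff γ h = if γ ∈ S then coeff γ g else 0 := by
    intro γ
    rw [hh]
    rw [MvPolynomial.coeff_sum]
    rw [Finset.sum_congr rfl (fun δ _ => MvPolynomial.coeff_monomial γ δ (coeff δ g))]
    simp [Finset.sum_ite_eq]
  have hhne : h ≠ 0 := by
    obtain ⟨γ₀, hγ₀, hγ₀t⟩ := ht₀mem
    intro h0
    have : coeff γ₀ h = coeff γ₀ g := by
      rw [hcoeffh]
      simp only [hS, Finset.mem_filter]
      rw [if_pos ⟨hγ₀, hγ₀t.symm⟩]
    rw [h0] at this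
    exact (mem_support_iff.mp hγ₀) (by simpa using this.symm)
  obtain ⟨w, hwabs, hweval⟩ := exists_torus_point n h hhne
  set a : (Fin n →₀ ℕ) → ℂ := fun γ => coeff γ g * ∏ i, w i ^ γ i with ha
  set c : ℂ := eval w h with hc
  have hceq : c = ∑ γ ∈ S, a γ := by
    rw [hc, hh]
    rw [map_sum]
    refine Finset.sum_congr rfl fun γ _ => ?_
    rw [eval_monomial, ha]
    congr 1
    exact Finsupp.prod_pow γ w
  -- G r
  set G : ℝ → ℂ := fun r => ∑ γ ∈ g.support, a γ * ((r ^ (tw γ - t₀) : ℝ) : ℂ) with hG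
  have hident : ∀ r : ℝ, 0 < r →
      eval (fun i => w i * ((r ^ b i : ℝ) : ℂ)) g = ((r ^ t₀ : ℝ) : ℂ) * G r := by
    intro r hr
    rw [eval_eq', hG, Finset.mul_sum]
    refine Finset.sum_congr rfl fun γ hγ => ?_
    have hprod : ∏ i, (w i * ((r ^ b i : ℝ) : ℂ)) ^ γ i
        = (∏ i, w i ^ γ i) * ((r ^ tw γ : ℝ) : ℂ) := by
      simp_rw [mul_pow]
      rw [Finset.prod_mul_distrib]
      congr 1
      have hterm : ∀ i : Fin n, ((r ^ b i : ℝ) : ℂ) ^ γ i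
          = ((r ^ (b i * (γ i : ℝ)) : ℝ) : ℂ) := by
        intro i
        rw [← Complex.ofReal_pow, Real.rpow_mul hr.le, Real.rpow_natCast]
      simp_rw [hterm]
      rw [← Complex.ofReal_prod, ← Real.rpow_sum_of_pos hr]
      have hsum : ∑ i, b i * (γ i : ℝ) = tw γ := by
        rw [htw]
        exact Finset.sum_congr rfl fun i _ => mul_comm _ _
      rw [hsum]
    rw [hprod]
    have hsplit : (r ^ tw γ : ℝ) = r ^ t₀ * r ^ (tw γ - t₀) := by
      rw [← Real.rpow_add hr]; ring_nf
    rw [hsplit, ha]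
    push_cast
    ring
  -- limit of G as r → 0+
  have hlim : Filter.Tendsto G (nhdsWithin 0 (Set.Ioi 0)) (nhds c) := by
    have hcs : c = ∑ γ ∈ g.support, (if tw γ = t₀ then a γ else 0) := by
      rw [hceq, hS, Finset.sum_filter]
    rw [hcs, hG]
    refine tendsto_finset_sum _ fun γ hγ => ?_
    by_cases hcase : tw γ = t₀
    · rw [if_pos hcase]
      simpa [hcase, Real.rpow_zero] using
        (tendsto_const_nhds : Filter.Tendsto (fun _ : ℝ => a γ) (nhdsWithin 0 (Set.Ioi 0)) _)
    · rw [if_neg hcase]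
      have hε : 0 < tw γ - t₀ :=
        sub_pos.mpr (lt_of_le_of_ne (ht₀le γ hγ) (fun e => hcase e.symm))
      have h1 : Filter.Tendsto (fun r : ℝ => r ^ (tw γ - t₀))
          (nhdsWithin 0 (Set.Ioi 0)) (nhds 0) := by
        have h2 := (Real.continuousAt_rpow_const 0 (tw γ - t₀)
          (Or.inr hε.le)).continuousWithinAt (s := Set.Ioi 0)
        unfold ContinuousWithinAt at h2
        simpa [Real.zero_rpow hε.ne'] using h2
      have h3 := (Complex.continuous_ofReal.tendsto 0).comp h1
      have h4 := h3.const_mul (a γ)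
      simpa using h4
  have hcabs : 0 < ‖c‖ := by
    simpa [norm_pos_iff] using hweval
  have habs : Filter.Tendsto (fun r => ‖G r‖)
      (nhdsWithin 0 (Set.Ioi 0)) (nhds (‖c‖)) :=
    (continuous_norm.tendsto c).comp hlim
  have hev : ∀ᶠ r in nhdsWithin (0:ℝ) (Set.Ioi 0),
      ‖c‖ / 2 < ‖G r‖ :=
    habs.eventually (eventually_gt_nhds (half_lt_self hcabs))
  rw [Filter.eventually_iff, mem_nhdsGT_iff_exists_Ioo_subset] at hev
  obtain ⟨u, hu, hsub⟩ := hev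
  refine ⟨w, hwabs, ‖c‖ / 2, half_pos hcabs, u, hu, ?_⟩
  intro r hr hru
  rw [hident r hr]
  rw [norm_mul]
  have h5 : ‖((r ^ t₀ : ℝ) : ℂ)‖ = r ^ t₀ := by
    rw [Complex.norm_real, Real.norm_of_nonneg (Real.rpow_nonneg hr.le t₀)]
  rw [h5]
  have h6 : ‖c‖ / 2 ≤ ‖G r‖ := (hsub ⟨hr, hru⟩).le
  calc ‖c‖ / 2 * r ^ t₀ ≤ ‖G r‖ * r ^ t₀ :=
        mul_le_mul_of_nonneg_right h6 (Real.rpow_nonneg hr.le t₀)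
    _ = r ^ t₀ * ‖G r‖ := mul_comm _ _
end
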